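/- arXiv:1211.4958 — 7 statements merged into one kernel-verified Lean document; each statement's English description precedes it below -/
import Mathlib

section
/- Let n ∈ ℕ and let S^n = {x ∈ EuclideanSpace ℝ (Fin (n+1)) : ‖x‖ = 1} carry the spherical distance d(x,y) = arccos ⟪x,y⟫. Let C ⊆ S^n be nonempty, closed, and spherically convex (for all u, v ∈ C with d(u,v) < π, every z ∈ S^n with d(u,z) + d(z,v) = d(u,v) belongs to C). Let x, y ∈ S^n with infimum distances to C satisfying d(x,C) < π/2 and d(y,C) < π/2, let p, q ∈ C satisfy d(x,p) ≤ d(x,c) and d(y,q) ≤ d(y,c) for all c ∈ C, and let x′, y′ ∈ S^n satisfy d(x,p) = d(p,x′), d(x,x′) = d(x,p) + d(p,x′), d(y,q) = d(q,y′), and d(y,y′) = d(y,q) + d(q,y′) (so x′ and y′ are reflections of x and y with respect to C). Then d(x′,y′) ≤ d(x,y). -/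
/-!
The reflection of `x` through its nearest point `p` is `x' = 2⟪x, p⟫ p - x`, hence
`⟪x', y'⟫ - ⟪x, y⟫ = 2⟪x, p⟫ (⟪y, q⟫⟪q, p⟫ - ⟪y, p⟫) + 2⟪y, q⟫ (⟪x, p⟫⟪p, q⟫ - ⟪x, q⟫)`.
Both brackets are nonnegative by the spherical obtuse-angle criterion `⟪x, c⟫ ≤ ⟪x, p⟫⟪p, c⟫`
for `c ∈ C`, which is the first-order condition for `p` to maximize `⟪x, ·⟫` along the
great-circle arc from `p` to `c` (an arc contained in `C` by convexity), and `⟪x, p⟫, ⟪y, q⟫ > 0`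
because both distances to `C` are below `π / 2`. Since `arccos` is antitone, `d(x', y') ≤ d(x, y)`.
-/

open Real

/-- The spherical (angular) distance on the unit sphere of a Euclidean space:
`d(x,y) = arccos ⟪x,y⟫`. -/
noncomputable def sphericalDist {n : ℕ} (u v : EuclideanSpace ℝ (Fin (n + 1))) : ℝ :=
  Real.arccos (inner ℝ u v)

open Set
open scoped RealInnerProductSpace

lemma csInf_image_eq_of_le {α β : Type*} [ConditionallyCompleteLattice β] {f : α → β}
    {s : Set α} {a : α} (ha : a ∈ s) (h : ∀ b ∈ s, f a ≤ f b) : sInf (f '' s) = f a :=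
  IsLeast.csInf_eq ⟨mem_image_of_mem f ha, forall_mem_image.2 h⟩

lemma nonpos_of_forall_mul_cos_add_mul_sin_le {a u φ : ℝ} (hφ : 0 < φ)
    (h : ∀ t ∈ Icc 0 φ, a * cos t + u * sin t ≤ a) : u ≤ 0 := by
  have hmax : IsLocalMaxOn (fun t => a * cos t + u * sin t) (Icc 0 φ) 0 :=
    IsMaxOn.localize fun t ht => by simpa using h t ht
  have hderiv : HasDerivAt (fun t => a * cos t + u * sin t) u 0 := by
    simpa using ((hasDerivAt_cos 0).const_mul a).fun_add ((hasDerivAt_sin 0).const_mul u)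
  have hφ_mem : φ ∈ posTangentConeAt (Icc 0 φ) (0 : ℝ) :=
    mem_posTangentConeAt_of_segment_subset (by simp [segment_eq_Icc hφ.le])
  have := hmax.hasFDerivWithinAt_nonpos hderiv.hasFDerivAt.hasFDerivWithinAt hφ_mem
  simp only [ContinuousLinearMap.toSpanSingleton_apply, smul_eq_mul] at this
  exact nonpos_of_mul_nonpos_right this hφ

section

variable {E : Type*} [NormedAddCommGroup E] [InnerProductSpace ℝ E]

noncomputable def greatCircle (p w : E) (t : ℝ) : E := cos t • p + sin t • w

@[simp] lemma greatCircle_zero (p w : E) : greatCircle p w 0 = p := by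
  simp [greatCircle]

lemma inner_greatCircle {p w : E} (hp : ‖p‖ = 1) (hw : ‖w‖ = 1) (hpw : ⟪p, w⟫ = 0)
    (s t : ℝ) : ⟪greatCircle p w s, greatCircle p w t⟫ = cos (t - s) := by
  simp only [greatCircle, inner_add_left, inner_add_right, real_inner_smul_left,
    real_inner_smul_right, real_inner_self_eq_norm_sq, hp, hw, hpw, real_inner_comm p w, cos_sub]
  ring

lemma norm_greatCircle {p w : E} (hp : ‖p‖ = 1) (hw : ‖w‖ = 1) (hpw : ⟪p, w⟫ = 0) (t : ℝ) :
    ‖greatCircle p w t‖ = 1 := by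
  have := inner_greatCircle hp hw hpw t t
  rw [sub_self, cos_zero, real_inner_self_eq_norm_sq] at this
  exact (pow_eq_one_iff_of_nonneg (norm_nonneg _) two_ne_zero).1 this

lemma arccos_inner_greatCircle {p w : E} (hp : ‖p‖ = 1) (hw : ‖w‖ = 1) (hpw : ⟪p, w⟫ = 0)
    {s t : ℝ} (hst : s ≤ t) (hts : t ≤ s + π) :
    arccos ⟪greatCircle p w s, greatCircle p w t⟫ = t - s := by
  rw [inner_greatCircle hp hw hpw, arccos_cos] <;> linarith

lemma exists_eq_greatCircle_arccos {p c : E} (hp : ‖p‖ = 1) (hc : ‖c‖ = 1)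
    (hpc₁ : -1 < ⟪p, c⟫) (hpc₂ : ⟪p, c⟫ < 1) :
    ∃ w : E, ‖w‖ = 1 ∧ ⟪p, w⟫ = 0 ∧ c = greatCircle p w (arccos ⟪p, c⟫) := by
  set k := ⟪p, c⟫ with hk
  have hsin : 0 < sin (arccos k) := by
    rw [sin_arccos]; exact sqrt_pos.2 (by nlinarith)
  have hnorm : ‖c - k • p‖ = sin (arccos k) := by
    rw [sin_arccos, ← sqrt_sq (norm_nonneg _), norm_sub_sq_real, real_inner_smul_right,
      norm_smul, real_inner_comm, ← hk, hp, hc, norm_eq_abs, mul_one, sq_abs]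
    ring_nf
  refine ⟨(sin (arccos k))⁻¹ • (c - k • p), ?_, ?_, ?_⟩
  · rw [norm_smul, hnorm, norm_inv, norm_of_nonneg hsin.le, inv_mul_cancel₀ hsin.ne']
  · rw [real_inner_smul_right, inner_sub_right, real_inner_smul_right, ← hk,
      real_inner_self_eq_norm_sq, hp]
    ring
  · rw [greatCircle, smul_smul, mul_inv_cancel₀ hsin.ne', one_smul,
      cos_arccos hpc₁.le hpc₂.le]
    abel

theorem inner_le_inner_mul_inner_of_max_on_arc {x p c : E} (hp : ‖p‖ = 1) (hc : ‖c‖ = 1)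
    (hpc : -1 < ⟪p, c⟫)
    (hmax : ∀ z : E, ‖z‖ = 1 → arccos ⟪p, z⟫ + arccos ⟪z, c⟫ = arccos ⟪p, c⟫ →
      ⟪x, z⟫ ≤ ⟪x, p⟫) :
    ⟪x, c⟫ ≤ ⟪x, p⟫ * ⟪p, c⟫ := by
  rcases eq_or_ne p c with rfl | hne
  · rw [real_inner_self_eq_norm_sq, hp, one_pow, mul_one]
  have hpc' : ⟪p, c⟫ < 1 := (real_inner_le_one_of_norm_eq_one hp hc).lt_of_ne
    (mt (inner_eq_one_iff_of_norm_eq_one hp hc).1 hne)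
  obtain ⟨w, hw, hpw, hcw⟩ := exists_eq_greatCircle_arccos hp hc hpc hpc'
  set φ := arccos ⟪p, c⟫ with hφ
  have hφ0 : 0 < φ := arccos_pos.2 hpc'
  have hφπ : φ < π := arccos_lt_pi.2 hpc
  have hinner (t : ℝ) : ⟪x, greatCircle p w t⟫ = ⟪x, p⟫ * cos t + ⟪x, w⟫ * sin t := by
    simp only [greatCircle, inner_add_right, real_inner_smul_right]
    ring
  have hxw : ⟪x, w⟫ ≤ 0 := by
    refine nonpos_of_forall_mul_cos_add_mul_sin_le (a := ⟪x, p⟫) hφ0 fun t ⟨ht0, htφ⟩ => ?_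
    rw [← hinner]
    refine hmax _ (norm_greatCircle hp hw hpw t) ?_
    have hpt := arccos_inner_greatCircle hp hw hpw ht0 (by linarith)
    have htc := arccos_inner_greatCircle hp hw hpw htφ (by linarith)
    rw [greatCircle_zero] at hpt
    rw [← hcw] at htc
    rw [hpt, htc]
    ring
  calc ⟪x, c⟫ = ⟪x, p⟫ * cos φ + ⟪x, w⟫ * sin φ := by rw [← hinner, ← hcw]
    _ ≤ ⟪x, p⟫ * cos φ :=
      add_le_of_nonpos_right (mul_nonpos_of_nonpos_of_nonneg hxw
        (sin_nonneg_of_nonneg_of_le_pi hφ0.le hφπ.le))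
    _ = ⟪x, p⟫ * ⟪p, c⟫ := by rw [hφ, cos_arccos hpc.le hpc'.le]

theorem inner_le_inner_mul_inner_of_nearest {C : Set E} (hC_sub : ∀ c ∈ C, ‖c‖ = 1)
    (hC_conv : ∀ u ∈ C, ∀ v ∈ C, arccos ⟪u, v⟫ < π → ∀ z : E, ‖z‖ = 1 →
      arccos ⟪u, z⟫ + arccos ⟪z, v⟫ = arccos ⟪u, v⟫ → z ∈ C)
    {x p c : E} (hx : ‖x‖ = 1) (hpC : p ∈ C)
    (hp_proj : ∀ z ∈ C, arccos ⟪x, p⟫ ≤ arccos ⟪x, z⟫) (hc : c ∈ C) :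
    ⟪x, c⟫ ≤ ⟪x, p⟫ * ⟪p, c⟫ := by
  have hp := hC_sub p hpC
  have hc1 := hC_sub c hc
  rcases (neg_one_le_real_inner_of_norm_eq_one hp hc1).eq_or_lt with hpc | hpc
  · obtain rfl : p = -c := (inner_eq_neg_one_iff_of_norm_eq_one hp hc1).1 hpc.symm
    simp [inner_neg_right, hc1]
  refine inner_le_inner_mul_inner_of_max_on_arc hp hc1 hpc fun z hz hpzc => ?_
  have hzC := hC_conv p hpC c hc (arccos_lt_pi.2 hpc) z hz hpzc
  have hbounds {y : E} (hy : ‖y‖ = 1) : ⟪x, y⟫ ∈ Icc (-1) 1 :=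
    ⟨neg_one_le_real_inner_of_norm_eq_one hx hy, real_inner_le_one_of_norm_eq_one hx hy⟩
  exact (strictAntiOn_arccos.le_iff_ge (hbounds hp) (hbounds hz)).1 (hp_proj z hzC)

theorem eq_two_inner_smul_sub_of_arccos_inner {x p x' : E} (hx : ‖x‖ = 1) (hp : ‖p‖ = 1)
    (hx' : ‖x'‖ = 1) (h₁ : arccos ⟪x, p⟫ = arccos ⟪p, x'⟫)
    (h₂ : arccos ⟪x, x'⟫ = arccos ⟪x, p⟫ + arccos ⟪p, x'⟫) :
    x' = (2 * ⟪x, p⟫) • p - x := by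
  have hxp₁ := neg_one_le_real_inner_of_norm_eq_one hx hp
  have hxp₂ := real_inner_le_one_of_norm_eq_one hx hp
  have hpx' : ⟪p, x'⟫ = ⟪x, p⟫ :=
    ((arccos_inj (neg_one_le_real_inner_of_norm_eq_one hp hx')
      (real_inner_le_one_of_norm_eq_one hp hx') hxp₁ hxp₂).1 h₁.symm)
  have hxx' : ⟪x, x'⟫ = 2 * ⟪x, p⟫ ^ 2 - 1 := by
    rw [← cos_arccos (neg_one_le_real_inner_of_norm_eq_one hx hx')
      (real_inner_le_one_of_norm_eq_one hx hx'), h₂, ← h₁, ← two_mul, cos_two_mul,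
      cos_arccos hxp₁ hxp₂]
  rw [← sub_eq_zero, ← norm_eq_zero, ← sq_eq_zero_iff, ← real_inner_self_eq_norm_sq]
  simp only [inner_sub_left, inner_sub_right, real_inner_smul_left, real_inner_smul_right,
    inner_self_eq_one_of_norm_eq_one hx, inner_self_eq_one_of_norm_eq_one hp,
    inner_self_eq_one_of_norm_eq_one hx', real_inner_comm p x', real_inner_comm x x',
    real_inner_comm x p, hpx', hxx']
  ring

theorem real_inner_le_inner_two_inner_smul_sub {x y p q : E} (hxp : 0 ≤ ⟪x, p⟫)
    (hyq : 0 ≤ ⟪y, q⟫) (hxq : ⟪x, q⟫ ≤ ⟪x, p⟫ * ⟪p, q⟫) (hyp : ⟪y, p⟫ ≤ ⟪y, q⟫ * ⟪q, p⟫) :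
    ⟪x, y⟫ ≤ ⟪(2 * ⟪x, p⟫) • p - x, (2 * ⟪y, q⟫) • q - y⟫ := by
  have hexpand : ⟪(2 * ⟪x, p⟫) • p - x, (2 * ⟪y, q⟫) • q - y⟫ = ⟪x, y⟫ +
      2 * ⟪x, p⟫ * (⟪y, q⟫ * ⟪q, p⟫ - ⟪y, p⟫) + 2 * ⟪y, q⟫ * (⟪x, p⟫ * ⟪p, q⟫ - ⟪x, q⟫) := by
    simp only [inner_sub_left, inner_sub_right, real_inner_smul_left, real_inner_smul_right,
      real_inner_comm p y, real_inner_comm p q]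
    ring
  rw [hexpand]
  have := mul_nonneg (mul_nonneg zero_le_two hxp) (sub_nonneg.2 hyp)
  have := mul_nonneg (mul_nonneg zero_le_two hyq) (sub_nonneg.2 hxq)
  linarith

end

theorem reflection_nonexpansive_sphere_general {n : ℕ}
    (C : Set (EuclideanSpace ℝ (Fin (n + 1))))
    (hC_sub : ∀ c ∈ C, ‖c‖ = 1)
    (hC_conv : ∀ u ∈ C, ∀ v ∈ C, sphericalDist u v < π →
      ∀ z : EuclideanSpace ℝ (Fin (n + 1)), ‖z‖ = 1 →
        sphericalDist u z + sphericalDist z v = sphericalDist u v → z ∈ C)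
    (x y x' y' p q : EuclideanSpace ℝ (Fin (n + 1)))
    (hx : ‖x‖ = 1) (hy : ‖y‖ = 1) (hx' : ‖x'‖ = 1) (hy' : ‖y'‖ = 1)
    (hpC : p ∈ C) (hqC : q ∈ C)
    (hxC : sInf ((fun c => sphericalDist x c) '' C) < π / 2)
    (hyC : sInf ((fun c => sphericalDist y c) '' C) < π / 2)
    (hp_proj : ∀ c ∈ C, sphericalDist x p ≤ sphericalDist x c)
    (hq_proj : ∀ c ∈ C, sphericalDist y q ≤ sphericalDist y c)
    (hx'1 : sphericalDist x p = sphericalDist p x')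
    (hx'2 : sphericalDist x x' = sphericalDist x p + sphericalDist p x')
    (hy'1 : sphericalDist y q = sphericalDist q y')
    (hy'2 : sphericalDist y y' = sphericalDist y q + sphericalDist q y') :
    sphericalDist x' y' ≤ sphericalDist x y := by
  have hp := hC_sub p hpC
  have hq := hC_sub q hqC
  have hxp : 0 < ⟪x, p⟫ := arccos_lt_pi_div_two.1 <|
    (csInf_image_eq_of_le hpC hp_proj).symm.trans_lt hxC
  have hyq : 0 < ⟪y, q⟫ := arccos_lt_pi_div_two.1 <|
    (csInf_image_eq_of_le hqC hq_proj).symm.trans_lt hyC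
  rw [sphericalDist, sphericalDist, eq_two_inner_smul_sub_of_arccos_inner hx hp hx' hx'1 hx'2,
    eq_two_inner_smul_sub_of_arccos_inner hy hq hy' hy'1 hy'2]
  exact arccos_le_arccos <| real_inner_le_inner_two_inner_smul_sub hxp.le hyq.le
    (inner_le_inner_mul_inner_of_nearest hC_sub hC_conv hx hpC hp_proj hqC)
    (inner_le_inner_mul_inner_of_nearest hC_sub hC_conv hy hqC hq_proj hpC)

/-- The reflection mapping with respect to a nonempty closed spherically convex subset of the
unit sphere `S^n` is nonexpansive on points whose distance to the set is less than `π/2`. -/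
theorem reflection_nonexpansive_sphere {n : ℕ}
    (C : Set (EuclideanSpace ℝ (Fin (n + 1))))
    (hC_sub : ∀ c ∈ C, ‖c‖ = 1) (hC_ne : C.Nonempty) (hC_cl : IsClosed C)
    (hC_conv : ∀ u ∈ C, ∀ v ∈ C, sphericalDist u v < π →
      ∀ z : EuclideanSpace ℝ (Fin (n + 1)), ‖z‖ = 1 →
        sphericalDist u z + sphericalDist z v = sphericalDist u v → z ∈ C)
    (x y x' y' p q : EuclideanSpace ℝ (Fin (n + 1)))
    (hx : ‖x‖ = 1) (hy : ‖y‖ = 1) (hx' : ‖x'‖ = 1) (hy' : ‖y'‖ = 1)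
    (hpC : p ∈ C) (hqC : q ∈ C)
    (hxC : sInf ((fun c => sphericalDist x c) '' C) < π / 2)
    (hyC : sInf ((fun c => sphericalDist y c) '' C) < π / 2)
    (hp_proj : ∀ c ∈ C, sphericalDist x p ≤ sphericalDist x c)
    (hq_proj : ∀ c ∈ C, sphericalDist y q ≤ sphericalDist y c)
    (hx'1 : sphericalDist x p = sphericalDist p x')
    (hx'2 : sphericalDist x x' = sphericalDist x p + sphericalDist p x')
    (hy'1 : sphericalDist y q = sphericalDist q y')
    (hy'2 : sphericalDist y y' = sphericalDist y q + sphericalDist q y') :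
    sphericalDist x' y' ≤ sphericalDist x y :=
  reflection_nonexpansive_sphere_general C hC_sub hC_conv x y x' y' p q hx hy hx' hy' hpC hqC hxC
    hyC hp_proj hq_proj hx'1 hx'2 hy'1 hy'2
end

section
/- Let a, y, y′, b be points of the hyperbolic plane ℍ with dist y b = dist b y′ = (1/2)·dist y y′ (b is the midpoint of y and y′). Then cosh(dist a y) + cosh(dist a y′) = 2·cosh(dist a b)·cosh(dist b y). -/
/-!
In the hyperboloid model the point `z ∈ ℍ` becomes a unit timelike vector `Z` of a Minkowski
space and `cosh (dist z w)` is the Minkowski pairing of `Z` and `W`. If `b` is the midpoint of `y`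
and `y'`, with `c = cosh (dist b y)`, then `U = Y + Y' - 2c • B` is orthogonal to the timelike
vector `B` and has square norm `1 + 1 + 2(2c² - 1) - 8c² + 4c² = 0`; since the orthogonal
complement of a timelike vector is negative definite, `U = 0`. Pairing `Y + Y' = 2c • B` with `A`
gives the identity.
-/

open Real

namespace UpperHalfPlane

/-- The form `u₀ u₂ - u₁²` of signature `(1, 2)`, in light-cone coordinates. -/
noncomputable def minkowskiForm : LinearMap.BilinForm ℝ (ℝ × ℝ × ℝ) :=
  LinearMap.mk₂ ℝ (fun u v => (u.1 * v.2.2 + u.2.2 * v.1) / 2 - u.2.1 * v.2.1)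
    (fun _ _ _ => by simp only [Prod.fst_add, Prod.snd_add]; ring)
    (fun _ _ _ => by simp only [Prod.smul_fst, Prod.smul_snd, smul_eq_mul]; ring)
    (fun _ _ _ => by simp only [Prod.fst_add, Prod.snd_add]; ring)
    (fun _ _ _ => by simp only [Prod.smul_fst, Prod.smul_snd, smul_eq_mul]; ring)

theorem minkowskiForm_apply (u v : ℝ × ℝ × ℝ) :
    minkowskiForm u v = (u.1 * v.2.2 + u.2.2 * v.1) / 2 - u.2.1 * v.2.1 := rfl

theorem eq_zero_of_minkowskiForm_eq_zero {u w : ℝ × ℝ × ℝ} (hw : 0 < minkowskiForm w w)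
    (huw : minkowskiForm u w = 0) (hu : minkowskiForm u u = 0) : u = 0 := by
  obtain ⟨u₀, u₁, u₂⟩ := u
  obtain ⟨w₀, w₁, w₂⟩ := w
  simp only [minkowskiForm_apply] at hw huw hu
  replace hw : 0 < w₀ * w₂ - w₁ ^ 2 := by linarith
  have key : (u₁ * w₀ - u₀ * w₁) ^ 2 + u₀ ^ 2 * (w₀ * w₂ - w₁ ^ 2) = 0 := by
    linear_combination (2 * u₀ * w₀) * huw - w₀ ^ 2 * hu
  obtain ⟨h₁, h₀⟩ := (add_eq_zero_iff_of_nonneg (sq_nonneg _) (by positivity)).mp key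
  have hw₀ : w₀ ≠ 0 := by rintro rfl; nlinarith [sq_nonneg w₁]
  obtain rfl : u₀ = 0 := by simpa [hw.ne'] using h₀
  obtain rfl : u₁ = 0 := by simpa [hw₀] using h₁
  obtain rfl : u₂ = 0 := by simpa [hw₀] using huw
  rfl

noncomputable def toHyperboloid (z : ℍ) : ℝ × ℝ × ℝ :=
  (1 / z.im, z.re / z.im, (z.re ^ 2 + z.im ^ 2) / z.im)

theorem cosh_dist_eq_minkowskiForm (z w : ℍ) :
    cosh (dist z w) = minkowskiForm (toHyperboloid z) (toHyperboloid w) := by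
  rw [cosh_dist', minkowskiForm_apply, toHyperboloid, toHyperboloid]
  have := z.im_pos
  have := w.im_pos
  field_simp
  ring

theorem minkowskiForm_toHyperboloid_self (z : ℍ) :
    minkowskiForm (toHyperboloid z) (toHyperboloid z) = 1 := by
  rw [← cosh_dist_eq_minkowskiForm, dist_self, cosh_zero]

theorem toHyperboloid_add_eq_of_midpoint {y y' b : ℍ}
    (hb1 : dist y b = dist b y') (hb2 : dist b y' = (1 / 2) * dist y y') :
    toHyperboloid y + toHyperboloid y' = (2 * cosh (dist b y)) • toHyperboloid b := by
  rw [dist_comm b y]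
  have hy' : cosh (dist y' b) = cosh (dist y b) := by rw [hb1, dist_comm]
  have hyy' : cosh (dist y y') = 2 * cosh (dist y b) ^ 2 - 1 := by
    rw [show dist y y' = 2 * dist y b by linarith, cosh_two_mul, sinh_sq]; ring
  rw [← sub_eq_zero]
  apply eq_zero_of_minkowskiForm_eq_zero (w := toHyperboloid b)
    (by rw [minkowskiForm_toHyperboloid_self]; exact one_pos)
  all_goals
    simp only [map_add, map_sub, map_smul, LinearMap.add_apply, LinearMap.sub_apply,
      LinearMap.smul_apply, smul_eq_mul, ← cosh_dist_eq_minkowskiForm, dist_self, cosh_zero,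
      dist_comm y' y, dist_comm b y, dist_comm b y', hy', hyy']
    ring

end UpperHalfPlane

/-- In the hyperbolic plane, if `b` is the midpoint of `y` and `y'`, then
`cosh (dist a y) + cosh (dist a y') = 2 * cosh (dist a b) * cosh (dist b y)`. -/
theorem hyperbolic_midpoint_cosh_identity
    (a y y' b : UpperHalfPlane)
    (hb1 : dist y b = dist b y') (hb2 : dist b y' = (1 / 2) * dist y y') :
    Real.cosh (dist a y) + Real.cosh (dist a y') =
      2 * Real.cosh (dist a b) * Real.cosh (dist b y) := by
  rw [UpperHalfPlane.cosh_dist_eq_minkowskiForm a y, UpperHalfPlane.cosh_dist_eq_minkowskiForm a y',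
    ← map_add, UpperHalfPlane.toHyperboloid_add_eq_of_midpoint hb1 hb2, map_smul, smul_eq_mul,
    UpperHalfPlane.cosh_dist_eq_minkowskiForm a b]
  ring
end

section
/- Let E = EuclideanSpace ℝ (Fin n) and let A, B be nonempty closed convex subsets of E with A ∩ B ≠ ∅. Let P_A, P_B : E → E be the nearest-point projections onto A and B (P_C z ∈ C and ‖z − P_C z‖ ≤ ‖z − c‖ for all c ∈ C), set R_A = 2P_A − id, R_B = 2P_B − id, and define T : E → E by T z = (z + R_A (R_B z))/2. Given x_0 ∈ E, define x_{m+1} = T x_m. Then the sequence (x_m) converges to some x ∈ E with T x = x (equivalently R_A (R_B x) = x) and P_B x ∈ A ∩ B; moreover, the shadow sequence (P_B x_m) converges to P_B x, which belongs to A ∩ B. -/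
open Filter Topology Function

open RealInnerProductSpace

/-!
Every fixed point `y` of `T = (I + R_A R_B)/2` satisfies
`‖T z - y‖² + ‖T z - z‖² ≤ ‖z - y‖²`: projections onto convex sets are firmly nonexpansive,
so the reflections and their composition are nonexpansive, and averaging a nonexpansive map
with the identity gives this inequality by the parallelogram law. A point of `A ∩ B` is such
a fixed point, so the iterates are bounded and `‖x_{m+1} - x_m‖²` is summable. In finite
dimension a subsequence converges; its limit is a fixed point of `T`, and since the distance
of the iterates to any fixed point decreases, the whole sequence converges to it. Finally
`R_A R_B x = x` unwinds to `P_A (R_B x) = P_B x`, so `P_B x ∈ A ∩ B`.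
-/

lemma summable_of_add_le {a b : ℕ → ℝ} (ha : ∀ m, 0 ≤ a m) (hb : ∀ m, 0 ≤ b m)
    (h : ∀ m, a (m + 1) + b m ≤ a m) : Summable b := by
  have hpartial : ∀ N, ∑ m ∈ Finset.range N, b m + a N ≤ a 0 := by
    intro N
    induction N with
    | zero => simp
    | succ N ih => rw [Finset.sum_range_succ]; linarith [h N]
  exact summable_of_sum_range_le hb fun N => by linarith [hpartial N, ha N]

lemma tendsto_of_antitone_dist_of_tendsto_subseq {X : Type*} [PseudoMetricSpace X]
    {u : ℕ → X} {x : X} (hu : Antitone fun m => dist (u m) x) {φ : ℕ → ℕ}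
    (hφ : StrictMono φ) (hlim : Tendsto (u ∘ φ) atTop (𝓝 x)) : Tendsto u atTop (𝓝 x) := by
  rw [tendsto_iff_dist_tendsto_zero] at hlim ⊢
  exact (tendsto_iff_tendsto_subseq_of_antitone hu hφ.tendsto_atTop).2 hlim

section FirmlyQuasiNonexpansive

variable {X : Type*} [MetricSpace X]

def IsFirmlyQuasiNonexpansive (T : X → X) : Prop :=
  ∀ y, IsFixedPt T y → ∀ z, dist (T z) y ^ 2 + dist (T z) z ^ 2 ≤ dist z y ^ 2

namespace IsFirmlyQuasiNonexpansive

variable {T : X → X} (hT : IsFirmlyQuasiNonexpansive T) {xs : ℕ → X}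
  (hxs : ∀ m, xs (m + 1) = T (xs m)) {y : X} (hy : IsFixedPt T y)
include hT hxs hy

lemma antitone_dist_orbit : Antitone fun m => dist (xs m) y := by
  refine antitone_nat_of_succ_le fun m => (sq_le_sq₀ dist_nonneg dist_nonneg).1 ?_
  have h := hT y hy (xs m)
  rw [← hxs] at h
  linarith [sq_nonneg (dist (xs (m + 1)) (xs m))]

lemma tendsto_dist_succ_sq_orbit :
    Tendsto (fun m => dist (xs (m + 1)) (xs m) ^ 2) atTop (𝓝 0) := by
  refine (summable_of_add_le (a := fun m => dist (xs m) y ^ 2) (fun _ => sq_nonneg _)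
    (fun _ => sq_nonneg _) fun m => ?_).tendsto_atTop_zero
  simpa only [hxs] using hT y hy (xs m)

lemma exists_isFixedPt_tendsto_orbit [ProperSpace X] (hcont : Continuous T) :
    ∃ x, IsFixedPt T x ∧ Tendsto xs atTop (𝓝 x) := by
  have hbdd : ∀ m, xs m ∈ Metric.closedBall y (dist (xs 0) y) := fun m =>
    hT.antitone_dist_orbit hxs hy (Nat.zero_le m)
  obtain ⟨x, -, φ, hφ, hφx⟩ := tendsto_subseq_of_bounded Metric.isBounded_closedBall hbdd
  have hx : IsFixedPt T x := by
    have hgap := (hT.tendsto_dist_succ_sq_orbit hxs hy).comp hφ.tendsto_atTop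
    simp only [Function.comp_def, hxs] at hgap
    have hgap' : Tendsto (fun k => dist (T (xs (φ k))) (xs (φ k)) ^ 2) atTop
        (𝓝 (dist (T x) x ^ 2)) :=
      (((hcont.tendsto x).comp hφx).dist hφx).pow 2
    exact dist_eq_zero.1 (pow_eq_zero_iff two_ne_zero |>.1 (tendsto_nhds_unique hgap' hgap))
  exact ⟨x, hx, tendsto_of_antitone_dist_of_tendsto_subseq
    (hT.antitone_dist_orbit hxs hx) hφ hφx⟩

end IsFirmlyQuasiNonexpansive

end FirmlyQuasiNonexpansive

structure IsNearestPointMap {E : Type*} [NormedAddCommGroup E] (C : Set E) (P : E → E) :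
    Prop where
  mem : ∀ z, P z ∈ C
  norm_sub_le : ∀ z, ∀ c ∈ C, ‖z - P z‖ ≤ ‖z - c‖

lemma IsNearestPointMap.apply_of_mem {E : Type*} [NormedAddCommGroup E] {C : Set E}
    {P : E → E} (hP : IsNearestPointMap C P) {c : E} (hc : c ∈ C) : P c = c := by
  have h := hP.norm_sub_le c c hc
  rw [sub_self, norm_zero, norm_le_zero_iff, sub_eq_zero] at h
  exact h.symm

lemma isFixedPt_average_iff {M : Type*} [AddCommGroup M] [Module ℝ M] {N : M → M} {y : M} :
    IsFixedPt (fun z => (1 / 2 : ℝ) • (z + N z)) y ↔ IsFixedPt N y := by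
  change (1 / 2 : ℝ) • (y + N y) = y ↔ N y = y
  constructor <;> intro h
  · calc N y = (2 : ℝ) • ((1 / 2 : ℝ) • (y + N y)) - y := by module
      _ = y := by rw [h]; module
  · rw [h]; module

section InnerProductSpace

variable {F : Type*} [NormedAddCommGroup F] [InnerProductSpace ℝ F]

lemma dist_average_sq_add_le {y z w : F} (h : dist w y ≤ dist z y) :
    dist ((1 / 2 : ℝ) • (z + w)) y ^ 2 + dist ((1 / 2 : ℝ) • (z + w)) z ^ 2 ≤ dist z y ^ 2 := by
  rw [dist_comm _ z]
  simp only [dist_eq_norm] at h ⊢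
  rw [show (1 / 2 : ℝ) • (z + w) - y = (1 / 2 : ℝ) • ((z - y) + (w - y)) by module,
    show z - (1 / 2 : ℝ) • (z + w) = (1 / 2 : ℝ) • ((z - y) - (w - y)) by module,
    norm_smul, norm_smul, mul_pow, mul_pow, ← mul_add,
    parallelogram_law_with_norm ℝ]
  norm_num
  nlinarith [mul_self_le_mul_self (norm_nonneg _) h]

lemma isFirmlyQuasiNonexpansive_average {N : F → F} (hN : LipschitzWith 1 N) :
    IsFirmlyQuasiNonexpansive fun z => (1 / 2 : ℝ) • (z + N z) := by
  intro y hy z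
  refine dist_average_sq_add_le ?_
  simpa [(isFixedPt_average_iff.1 hy).eq] using hN.dist_le_mul z y

namespace IsNearestPointMap

variable {C : Set F} {P : F → F} (hP : IsNearestPointMap C P)
include hP

lemma inner_sub_le_zero (hC : Convex ℝ C) (z : F) {c : F} (hc : c ∈ C) :
    ⟪z - P z, c - P z⟫ ≤ 0 := by
  have : Nonempty C := ⟨⟨c, hc⟩⟩
  have hbdd : BddBelow (Set.range fun w : C => ‖z - w‖) :=
    ⟨0, Set.forall_mem_range.2 fun _ => norm_nonneg _⟩
  have hmin : ‖z - P z‖ = ⨅ w : C, ‖z - w‖ :=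
    le_antisymm (le_ciInf fun w => hP.norm_sub_le z w w.2) (ciInf_le hbdd ⟨P z, hP.mem z⟩)
  exact (norm_eq_iInf_iff_real_inner_le_zero hC (hP.mem z)).1 hmin c hc

lemma norm_sub_sq_le_inner (hC : Convex ℝ C) (z w : F) :
    ‖P z - P w‖ ^ 2 ≤ ⟪z - w, P z - P w⟫ := by
  have hz := hP.inner_sub_le_zero hC z (hP.mem w)
  have hw := hP.inner_sub_le_zero hC w (hP.mem z)
  rw [← real_inner_self_eq_norm_sq]
  simp only [inner_sub_left, inner_sub_right] at hz hw ⊢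
  linarith [real_inner_comm (P z) (P w)]

lemma lipschitzWith_one (hC : Convex ℝ C) : LipschitzWith 1 P := by
  refine LipschitzWith.of_dist_le_mul fun z w => ?_
  rw [NNReal.coe_one, one_mul, dist_eq_norm, dist_eq_norm]
  have h := (hP.norm_sub_sq_le_inner hC z w).trans (real_inner_le_norm _ _)
  nlinarith [norm_nonneg (P z - P w), norm_nonneg (z - w)]

lemma lipschitzWith_one_reflection (hC : Convex ℝ C) :
    LipschitzWith 1 fun z => (2 : ℝ) • P z - z := by
  refine LipschitzWith.of_dist_le_mul fun z w => ?_
  rw [NNReal.coe_one, one_mul, dist_eq_norm, dist_eq_norm,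
    ← sq_le_sq₀ (norm_nonneg _) (norm_nonneg _),
    show (2 : ℝ) • P z - z - ((2 : ℝ) • P w - w) = (2 : ℝ) • (P z - P w) - (z - w) by module,
    norm_sub_sq_real, norm_smul, real_inner_smul_left, real_inner_comm]
  norm_num
  nlinarith [hP.norm_sub_sq_le_inner hC z w]

end IsNearestPointMap

end InnerProductSpace

theorem AAR_convergence_euclidean_general {n : ℕ}
    (A B : Set (EuclideanSpace ℝ (Fin n)))
    (hA_conv : Convex ℝ A)
    (hB_conv : Convex ℝ B)
    (hAB : (A ∩ B).Nonempty)
    (PA PB RA RB T : EuclideanSpace ℝ (Fin n) → EuclideanSpace ℝ (Fin n))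
    (hPA_mem : ∀ z, PA z ∈ A) (hPA_proj : ∀ z, ∀ a ∈ A, ‖z - PA z‖ ≤ ‖z - a‖)
    (hPB_mem : ∀ z, PB z ∈ B) (hPB_proj : ∀ z, ∀ b ∈ B, ‖z - PB z‖ ≤ ‖z - b‖)
    (hRA : ∀ z, RA z = (2 : ℝ) • PA z - z) (hRB : ∀ z, RB z = (2 : ℝ) • PB z - z)
    (hT : ∀ z, T z = (1 / 2 : ℝ) • (z + RA (RB z)))
    (xs : ℕ → EuclideanSpace ℝ (Fin n))
    (hxs : ∀ m, xs (m + 1) = T (xs m)) :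
    ∃ x : EuclideanSpace ℝ (Fin n),
      Tendsto xs atTop (𝓝 x) ∧ T x = x ∧ RA (RB x) = x ∧ PB x ∈ A ∩ B ∧
        Tendsto (fun m => PB (xs m)) atTop (𝓝 (PB x)) := by
  obtain ⟨y, hyA, hyB⟩ := hAB
  have hPA : IsNearestPointMap A PA := ⟨hPA_mem, hPA_proj⟩
  have hPB : IsNearestPointMap B PB := ⟨hPB_mem, hPB_proj⟩
  have hN : LipschitzWith 1 (RA ∘ RB) := by
    rw [funext hRA, funext hRB]
    simpa using (hPA.lipschitzWith_one_reflection hA_conv).comp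
      (hPB.lipschitzWith_one_reflection hB_conv)
  obtain rfl : T = fun z => (1 / 2 : ℝ) • (z + (RA ∘ RB) z) := funext hT
  have hy : IsFixedPt (RA ∘ RB) y := by
    have hRBy : RB y = y := by rw [hRB, hPB.apply_of_mem hyB]; module
    have hRAy : RA y = y := by rw [hRA, hPA.apply_of_mem hyA]; module
    simp only [IsFixedPt, Function.comp_apply, hRBy, hRAy]
  obtain ⟨x, hx, hconv⟩ := (isFirmlyQuasiNonexpansive_average hN).exists_isFixedPt_tendsto_orbit
    hxs (isFixedPt_average_iff.2 hy) ((continuous_id.add hN.continuous).const_smul (1 / 2 : ℝ))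
  have hNx : RA (RB x) = x := isFixedPt_average_iff.1 hx
  have hPABx : PA (RB x) = PB x := by
    have h : (2 : ℝ) • PA (RB x) - RB x = x := (hRA _).symm.trans hNx
    refine smul_right_injective _ (two_ne_zero (α := ℝ)) ?_
    linear_combination (norm := module) h + hRB x
  exact ⟨x, hconv, hx, hNx, ⟨hPABx ▸ hPA_mem _, hPB_mem x⟩,
    ((hPB.lipschitzWith_one hB_conv).continuous.tendsto x).comp hconv⟩

/-- Convergence of the averaged alternating reflection (AAR) method in Euclidean space:
for nonempty closed convex sets `A`, `B` with `A ∩ B ≠ ∅`, the AAR iterates `x_{m+1} = T x_m`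
with `T z = (z + R_A R_B z)/2` converge to a fixed point `x` of `T`, `P_B x ∈ A ∩ B`, and the
shadow sequence `(P_B x_m)` converges to `P_B x`. -/
theorem AAR_convergence_euclidean {n : ℕ}
    (A B : Set (EuclideanSpace ℝ (Fin n)))
    (hA_ne : A.Nonempty) (hA_cl : IsClosed A) (hA_conv : Convex ℝ A)
    (hB_ne : B.Nonempty) (hB_cl : IsClosed B) (hB_conv : Convex ℝ B)
    (hAB : (A ∩ B).Nonempty)
    (PA PB RA RB T : EuclideanSpace ℝ (Fin n) → EuclideanSpace ℝ (Fin n))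
    (hPA_mem : ∀ z, PA z ∈ A) (hPA_proj : ∀ z, ∀ a ∈ A, ‖z - PA z‖ ≤ ‖z - a‖)
    (hPB_mem : ∀ z, PB z ∈ B) (hPB_proj : ∀ z, ∀ b ∈ B, ‖z - PB z‖ ≤ ‖z - b‖)
    (hRA : ∀ z, RA z = (2 : ℝ) • PA z - z) (hRB : ∀ z, RB z = (2 : ℝ) • PB z - z)
    (hT : ∀ z, T z = (1 / 2 : ℝ) • (z + RA (RB z)))
    (x0 : EuclideanSpace ℝ (Fin n)) (xs : ℕ → EuclideanSpace ℝ (Fin n))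
    (hxs0 : xs 0 = x0) (hxs : ∀ m, xs (m + 1) = T (xs m)) :
    ∃ x : EuclideanSpace ℝ (Fin n),
      Tendsto xs atTop (𝓝 x) ∧ T x = x ∧ RA (RB x) = x ∧ PB x ∈ A ∩ B ∧
        Tendsto (fun m => PB (xs m)) atTop (𝓝 (PB x)) :=
  AAR_convergence_euclidean_general A B hA_conv hB_conv hAB PA PB RA RB T hPA_mem hPA_proj hPB_mem
    hPB_proj hRA hRB hT xs hxs
end

section
/- Let E = EuclideanSpace ℝ (Fin n) and let A, B be nonempty closed convex subsets of E with A ∩ B ≠ ∅, with nearest-point projections P_A, P_B and reflections R_A = 2P_A − id, R_B = 2P_B − id. Let c ∈ (0, 1/2] and (λ_m) ⊆ [c, 1 − c], and for x_0 ∈ E define the Krasnoselski–Mann iteration x_{m+1} = (1 − λ_m)·x_m + λ_m·R_A (R_B x_m). Then ‖x_m − R_A (R_B x_m)‖ → 0 and (x_m) converges to some x ∈ E with R_A (R_B x) = x and P_B x ∈ A ∩ B. -/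
/-!
Reflections in convex sets are nonexpansive, so `T = R_A R_B` is nonexpansive, and every point of
`A ∩ B` is fixed by `T`. For a fixed point `q` of `T`, the identity
`‖(1 - t) u + t v‖² = (1 - t)‖u‖² + t‖v‖² - t(1 - t)‖u - v‖²` gives
`‖x_{m+1} - q‖² ≤ ‖x_m - q‖² - λ_m (1 - λ_m) ‖x_m - T x_m‖²`: the iterates are Fejér monotone
with respect to the fixed points of `T`, and the residuals `‖x_m - T x_m‖` tend to `0`. A
subsequence converges by compactness, its limit is fixed by `T` because the residuals vanish, and
Fejér monotonicity upgrades this to convergence of the whole sequence. Finally `R_A R_B x = x`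
unfolds to `P_A (R_B x) = P_B x`, so `P_B x ∈ A`.
-/

open Filter Topology Set
open scoped RealInnerProductSpace

section Projection

variable {E : Type*} [NormedAddCommGroup E] {K : Set E} {P : E → E}

theorem proj_eq_self_of_mem (hproj : ∀ z, ∀ a ∈ K, ‖z - P z‖ ≤ ‖z - a‖) {p : E} (hp : p ∈ K) :
    P p = p := by
  have h := hproj p p hp
  rw [sub_self, norm_zero, norm_le_zero_iff, sub_eq_zero] at h
  exact h.symm

variable [InnerProductSpace ℝ E]

theorem real_inner_sub_proj_le_zero (hK : Convex ℝ K) (hmem : ∀ z, P z ∈ K)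
    (hproj : ∀ z, ∀ a ∈ K, ‖z - P z‖ ≤ ‖z - a‖) (z : E) {w : E} (hw : w ∈ K) :
    ⟪z - P z, w - P z⟫ ≤ 0 := by
  have : Nonempty K := ⟨⟨P z, hmem z⟩⟩
  refine (norm_eq_iInf_iff_real_inner_le_zero hK (hmem z)).1 (le_antisymm ?_ ?_) w hw
  · exact le_ciInf fun w => hproj z w w.2
  · exact ciInf_le ⟨0, by rintro _ ⟨w, rfl⟩; positivity⟩ (⟨P z, hmem z⟩ : K)

theorem norm_sub_proj_sq_le_inner (hK : Convex ℝ K) (hmem : ∀ z, P z ∈ K)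
    (hproj : ∀ z, ∀ a ∈ K, ‖z - P z‖ ≤ ‖z - a‖) (x y : E) :
    ‖P x - P y‖ ^ 2 ≤ ⟪x - y, P x - P y⟫ := by
  have hx := real_inner_sub_proj_le_zero hK hmem hproj x (hmem y)
  have hy := real_inner_sub_proj_le_zero hK hmem hproj y (hmem x)
  simp only [← real_inner_self_eq_norm_sq, inner_sub_left, inner_sub_right] at hx hy ⊢
  linarith [real_inner_comm (P x) (P y)]

theorem lipschitzWith_one_reflection (hK : Convex ℝ K) (hmem : ∀ z, P z ∈ K)
    (hproj : ∀ z, ∀ a ∈ K, ‖z - P z‖ ≤ ‖z - a‖) :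
    LipschitzWith 1 fun z => (2 : ℝ) • P z - z := by
  refine LipschitzWith.mk_one fun x y => ?_
  have hfirm := norm_sub_proj_sq_le_inner hK hmem hproj x y
  have hsq : ‖(2 : ℝ) • (P x - P y) - (x - y)‖ ^ 2
      = 4 * ‖P x - P y‖ ^ 2 - 4 * ⟪x - y, P x - P y⟫ + ‖x - y‖ ^ 2 := by
    rw [norm_sub_sq_real, norm_smul, real_inner_smul_left, real_inner_comm (x - y)]
    norm_num
    ring
  rw [dist_eq_norm, dist_eq_norm,
    show (2 : ℝ) • P x - x - ((2 : ℝ) • P y - y) = (2 : ℝ) • (P x - P y) - (x - y) by module,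
    ← pow_le_pow_iff_left₀ (norm_nonneg _) (norm_nonneg _) two_ne_zero, hsq]
  linarith

end Projection

section KrasnoselskiiMann

variable {E : Type*} [NormedAddCommGroup E] [InnerProductSpace ℝ E]

theorem norm_one_sub_smul_add_smul_sq (t : ℝ) (u v : E) :
    ‖(1 - t) • u + t • v‖ ^ 2
      = (1 - t) * ‖u‖ ^ 2 + t * ‖v‖ ^ 2 - t * (1 - t) * ‖u - v‖ ^ 2 := by
  simp only [← real_inner_self_eq_norm_sq, inner_add_left, inner_add_right, inner_sub_left,
    inner_sub_right, real_inner_smul_left, real_inner_smul_right, real_inner_comm u v]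
  ring

theorem tendsto_zero_of_le_sub_succ {a b : ℕ → ℝ} (ha : BddBelow (range a))
    (hb : ∀ m, 0 ≤ b m) (hab : ∀ m, b m ≤ a m - a (m + 1)) : Tendsto b atTop (𝓝 0) := by
  have ha_anti : Antitone a := antitone_nat_of_succ_le fun m => by linarith [hb m, hab m]
  have hlim := tendsto_atTop_ciInf ha_anti ha
  have hdiff : Tendsto (fun m => a m - a (m + 1)) atTop (𝓝 0) := by
    simpa using hlim.sub (hlim.comp (tendsto_add_atTop_nat 1))
  exact squeeze_zero hb hab hdiff

variable {T : E → E} {lam : ℕ → ℝ} {xs : ℕ → E}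

theorem norm_km_step_sub_sq_le (hT : LipschitzWith 1 T) {q : E} (hq : T q = q) {t : ℝ}
    (ht : t ∈ Icc (0 : ℝ) 1) (x : E) :
    ‖(1 - t) • x + t • T x - q‖ ^ 2 ≤ ‖x - q‖ ^ 2 - t * (1 - t) * ‖x - T x‖ ^ 2 := by
  have hTx : ‖T x - q‖ ≤ ‖x - q‖ := by simpa [hq] using hT.norm_sub_le x q
  have hTx_sq : ‖T x - q‖ ^ 2 ≤ ‖x - q‖ ^ 2 := pow_le_pow_left₀ (norm_nonneg _) hTx 2
  rw [show (1 - t) • x + t • T x - q = (1 - t) • (x - q) + t • (T x - q) by module,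
    norm_one_sub_smul_add_smul_sq, show x - q - (T x - q) = x - T x by abel]
  have := mul_le_mul_of_nonneg_left hTx_sq ht.1
  linarith

theorem antitone_norm_km_sub_fixedPoint (hT : LipschitzWith 1 T)
    (hlam : ∀ m, lam m ∈ Icc (0 : ℝ) 1)
    (hxs : ∀ m, xs (m + 1) = (1 - lam m) • xs m + lam m • T (xs m)) {q : E} (hq : T q = q) :
    Antitone fun m => ‖xs m - q‖ := by
  refine antitone_nat_of_succ_le fun m => ?_
  have hstep := norm_km_step_sub_sq_le hT hq (hlam m) (xs m)
  rw [← hxs m] at hstep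
  have hdecr : 0 ≤ lam m * (1 - lam m) * ‖xs m - T (xs m)‖ ^ 2 :=
    mul_nonneg (mul_nonneg (hlam m).1 (sub_nonneg.2 (hlam m).2)) (sq_nonneg _)
  exact (pow_le_pow_iff_left₀ (norm_nonneg _) (norm_nonneg _) two_ne_zero).1 (by linarith)

theorem tendsto_norm_km_sub_apply (hT : LipschitzWith 1 T) {c : ℝ} (hc : 0 < c)
    (hlam : ∀ m, lam m ∈ Icc c (1 - c))
    (hxs : ∀ m, xs (m + 1) = (1 - lam m) • xs m + lam m • T (xs m)) {p : E} (hp : T p = p) :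
    Tendsto (fun m => ‖xs m - T (xs m)‖) atTop (𝓝 0) := by
  have hcc : 0 < c * (1 - c) := mul_pos hc (by linarith [(hlam 0).1, (hlam 0).2])
  have hsq : Tendsto (fun m => c * (1 - c) * ‖xs m - T (xs m)‖ ^ 2) atTop (𝓝 0) := by
    refine tendsto_zero_of_le_sub_succ (a := fun m => ‖xs m - p‖ ^ 2)
      ⟨0, by rintro _ ⟨m, rfl⟩; positivity⟩ (fun m => mul_nonneg hcc.le (sq_nonneg _)) fun m => ?_
    obtain ⟨hl₁, hl₂⟩ := hlam m
    have hstep := norm_km_step_sub_sq_le hT hp ⟨hc.le.trans hl₁, by linarith⟩ (xs m)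
    rw [← hxs m] at hstep
    have hcoef : c * (1 - c) ≤ lam m * (1 - lam m) := by
      nlinarith [mul_nonneg (sub_nonneg.2 hl₁) (sub_nonneg.2 hl₂)]
    have := mul_le_mul_of_nonneg_right hcoef (sq_nonneg ‖xs m - T (xs m)‖)
    linarith
  have hres_sq : Tendsto (fun m => ‖xs m - T (xs m)‖ ^ 2) atTop (𝓝 0) := by
    simpa only [inv_mul_cancel_left₀ hcc.ne', mul_zero] using hsq.const_mul (c * (1 - c))⁻¹
  simpa [Real.sqrt_sq (norm_nonneg _)] using hres_sq.sqrt

theorem exists_tendsto_km_fixedPoint [ProperSpace E] (hT : LipschitzWith 1 T)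
    (hlam : ∀ m, lam m ∈ Icc (0 : ℝ) 1)
    (hxs : ∀ m, xs (m + 1) = (1 - lam m) • xs m + lam m • T (xs m)) {p : E} (hp : T p = p)
    (hres : Tendsto (fun m => ‖xs m - T (xs m)‖) atTop (𝓝 0)) :
    ∃ x, Tendsto xs atTop (𝓝 x) ∧ T x = x := by
  have hfejer := fun q (hq : T q = q) => antitone_norm_km_sub_fixedPoint hT hlam hxs hq
  obtain ⟨x, -, φ, hφ, hxφ⟩ :=
    tendsto_subseq_of_bounded (Metric.isBounded_closedBall (x := p) (r := ‖xs 0 - p‖))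
      fun m => by simpa [dist_eq_norm] using hfejer p hp (Nat.zero_le m)
  have hTx : T x = x := by
    have hlim := (hxφ.sub ((hT.continuous.tendsto x).comp hxφ)).norm
    have h := tendsto_nhds_unique hlim (hres.comp hφ.tendsto_atTop)
    rw [norm_eq_zero, sub_eq_zero] at h
    exact h.symm
  refine ⟨x, ?_, hTx⟩
  rw [tendsto_iff_norm_sub_tendsto_zero,
    tendsto_iff_tendsto_subseq_of_antitone (hfejer x hTx) hφ.tendsto_atTop]
  exact tendsto_iff_norm_sub_tendsto_zero.1 hxφ

end KrasnoselskiiMann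

theorem KM_convergence_euclidean_general {n : ℕ}
    (A B : Set (EuclideanSpace ℝ (Fin n)))
    (hA_conv : Convex ℝ A)
    (hB_conv : Convex ℝ B)
    (hAB : (A ∩ B).Nonempty)
    (PA PB RA RB : EuclideanSpace ℝ (Fin n) → EuclideanSpace ℝ (Fin n))
    (hPA_mem : ∀ z, PA z ∈ A) (hPA_proj : ∀ z, ∀ a ∈ A, ‖z - PA z‖ ≤ ‖z - a‖)
    (hPB_mem : ∀ z, PB z ∈ B) (hPB_proj : ∀ z, ∀ b ∈ B, ‖z - PB z‖ ≤ ‖z - b‖)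
    (hRA : ∀ z, RA z = (2 : ℝ) • PA z - z) (hRB : ∀ z, RB z = (2 : ℝ) • PB z - z)
    (c : ℝ) (hc : c ∈ Set.Ioc (0 : ℝ) (1 / 2))
    (lam : ℕ → ℝ) (hlam : ∀ m, lam m ∈ Set.Icc c (1 - c))
    (xs : ℕ → EuclideanSpace ℝ (Fin n))
    (hxs : ∀ m, xs (m + 1) = (1 - lam m) • xs m + lam m • RA (RB (xs m))) :
    Tendsto (fun m => ‖xs m - RA (RB (xs m))‖) atTop (𝓝 0) ∧
      ∃ x : EuclideanSpace ℝ (Fin n),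
        Tendsto xs atTop (𝓝 x) ∧ RA (RB x) = x ∧ PB x ∈ A ∩ B := by
  have hT : LipschitzWith 1 fun z => RA (RB z) := by
    have h := (lipschitzWith_one_reflection hA_conv hPA_mem hPA_proj).comp
      (lipschitzWith_one_reflection hB_conv hPB_mem hPB_proj)
    rw [mul_one, ← funext hRA, ← funext hRB] at h
    exact h
  obtain ⟨p, hpA, hpB⟩ := hAB
  have hRBp : RB p = p := by rw [hRB, proj_eq_self_of_mem hPB_proj hpB]; module
  have hp : RA (RB p) = p := by rw [hRBp, hRA, proj_eq_self_of_mem hPA_proj hpA]; module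
  have hlam01 : ∀ m, lam m ∈ Icc (0 : ℝ) 1 := fun m =>
    ⟨hc.1.le.trans (hlam m).1, (hlam m).2.trans (by linarith [hc.1])⟩
  have hres := tendsto_norm_km_sub_apply hT hc.1 hlam hxs hp
  obtain ⟨x, hx, hTx⟩ := exists_tendsto_km_fixedPoint hT hlam01 hxs hp hres
  have hPAB : PA (RB x) = PB x := smul_right_injective _ (two_ne_zero : (2 : ℝ) ≠ 0) <| by
    rw [hRA] at hTx
    linear_combination (norm := module) hTx + hRB x
  exact ⟨hres, x, hx, hTx, hPAB ▸ hPA_mem (RB x), hPB_mem x⟩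

/-- Convergence of the Krasnoselski–Mann iteration for `R_A R_B` in Euclidean space:
for nonempty closed convex sets `A`, `B` with `A ∩ B ≠ ∅` and coefficients
`λ_m ∈ [c, 1-c]` with `0 < c ≤ 1/2`, the iterates
`x_{m+1} = (1 - λ_m) x_m + λ_m R_A R_B x_m` satisfy `‖x_m - R_A R_B x_m‖ → 0` and
converge to a fixed point `x` of `R_A R_B` with `P_B x ∈ A ∩ B`. -/
theorem KM_convergence_euclidean {n : ℕ}
    (A B : Set (EuclideanSpace ℝ (Fin n)))
    (hA_ne : A.Nonempty) (hA_cl : IsClosed A) (hA_conv : Convex ℝ A)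
    (hB_ne : B.Nonempty) (hB_cl : IsClosed B) (hB_conv : Convex ℝ B)
    (hAB : (A ∩ B).Nonempty)
    (PA PB RA RB : EuclideanSpace ℝ (Fin n) → EuclideanSpace ℝ (Fin n))
    (hPA_mem : ∀ z, PA z ∈ A) (hPA_proj : ∀ z, ∀ a ∈ A, ‖z - PA z‖ ≤ ‖z - a‖)
    (hPB_mem : ∀ z, PB z ∈ B) (hPB_proj : ∀ z, ∀ b ∈ B, ‖z - PB z‖ ≤ ‖z - b‖)
    (hRA : ∀ z, RA z = (2 : ℝ) • PA z - z) (hRB : ∀ z, RB z = (2 : ℝ) • PB z - z)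
    (c : ℝ) (hc : c ∈ Set.Ioc (0 : ℝ) (1 / 2))
    (lam : ℕ → ℝ) (hlam : ∀ m, lam m ∈ Set.Icc c (1 - c))
    (x0 : EuclideanSpace ℝ (Fin n)) (xs : ℕ → EuclideanSpace ℝ (Fin n))
    (hxs0 : xs 0 = x0)
    (hxs : ∀ m, xs (m + 1) = (1 - lam m) • xs m + lam m • RA (RB (xs m))) :
    Tendsto (fun m => ‖xs m - RA (RB (xs m))‖) atTop (𝓝 0) ∧
      ∃ x : EuclideanSpace ℝ (Fin n),
        Tendsto xs atTop (𝓝 x) ∧ RA (RB x) = x ∧ PB x ∈ A ∩ B :=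
  KM_convergence_euclidean_general A B hA_conv hB_conv hAB PA PB RA RB hPA_mem hPA_proj hPB_mem
    hPB_proj hRA hRB c hc lam hlam xs hxs
end

section
/- Let x, x′, y, y′, a, b be points of the hyperbolic plane ℍ such that a is the midpoint of x and x′ (dist x a = dist a x′ = (1/2)·dist x x′), b is the midpoint of y and y′, and dist x a < dist y b. Suppose that for every λ ∈ [0,1] and all points x_λ, y_λ ∈ ℍ with dist x x_λ = λ·dist x a, dist x_λ a = (1 − λ)·dist x a, dist y y_λ = λ·dist y b, and dist y_λ b = (1 − λ)·dist y b, one has dist a b ≤ dist x_λ y_λ. Assume additionally that cosh(dist b y)·cosh(dist b a) ≥ cosh(dist y a) or cosh(dist a x)·cosh(dist a b) ≤ cosh(dist x b) (i.e., the angle γ at b between [b,y] and [b,a] satisfies γ ≤ π/2, or the angle γ′ at a between [a,x] and [a,b] satisfies γ′ ≥ π/2). Then dist x′ y′ ≤ dist x y. -/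
/-!
Write `p = d(x,a)`, `q = d(y,b)` and let `Kₐ = cosh p cosh d(a,b) - cosh d(x,b)`,
`K_b = cosh q cosh d(a,b) - cosh d(y,a)` be the law-of-cosines numerators of the angles at `a`
and `b`. Stewart's theorem in the hyperbolic plane describes the point reflections in `a` and `b`:
`cosh d(x',y') = cosh d(x,y) + 2 cosh q Kₐ + 2 cosh p K_b`, so it suffices to show
`cosh q Kₐ + cosh p K_b ≤ 0`. Stewart's theorem also makes `sinh p sinh q cosh d(x_λ, y_λ)` an
explicit function of `λ`, and minimality of `d(a,b)` at `λ = 1` yields the first-variation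
inequality `p sinh q Kₐ + q sinh p K_b ≤ 0`. The angle hypothesis then forces `Kₐ ≤ 0`, and as
`t ↦ tanh t / t` is decreasing and `p < q`, the two inequalities combine to the claim.
When `p = 0` the point `x = a = x'` is fixed and only the angle at `b` matters.
-/

open Real Set

theorem Real.mul_sinh_le_mul_sinh {u v : ℝ} (hu : 0 ≤ u) (huv : u ≤ v) :
    v * sinh u ≤ u * sinh v := by
  refine hasSum_le (fun n ↦ ?_) ((hasSum_sinh u).mul_left v) ((hasSum_sinh v).mul_left u)
  have : u ^ (2 * n) ≤ v ^ (2 * n) := pow_le_pow_left₀ hu huv _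
  rw [pow_succ, pow_succ, ← mul_div_assoc, ← mul_div_assoc]
  gcongr ?_ / _
  nlinarith [mul_le_mul_of_nonneg_left this (mul_nonneg hu (hu.trans huv))]

theorem Real.mul_cosh_mul_sinh_le {p q : ℝ} (hp : 0 ≤ p) (hpq : p ≤ q) :
    p * cosh p * sinh q ≤ q * sinh p * cosh q := by
  have h := mul_sinh_le_mul_sinh (sub_nonneg.2 hpq) (by linarith : q - p ≤ q + p)
  rw [sinh_sub, sinh_add] at h
  nlinarith

theorem IsMinOn.hasDerivWithinAt_nonneg {f : ℝ → ℝ} {f' a b : ℝ} (hab : a < b)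
    (hmin : IsMinOn f (Icc a b) a) (hf : HasDerivWithinAt f f' (Icc a b) a) : 0 ≤ f' := by
  have : b - a ∈ posTangentConeAt (Icc a b) a :=
    sub_mem_posTangentConeAt_of_segment_subset (segment_eq_Icc hab.le ▸ Subset.rfl)
  have := hmin.localize.hasFDerivWithinAt_nonneg hf this
  rw [ContinuousLinearMap.toSpanSingleton_apply, smul_eq_mul] at this
  exact nonneg_of_mul_nonneg_right this (sub_pos.2 hab)

theorem hasDerivAt_sinh_mul_add_sinh_one_sub_mul {f g : ℝ → ℝ} {f' g' : ℝ} (r : ℝ)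
    (hf : HasDerivAt f f' 0) (hg : HasDerivAt g g' 0) :
    HasDerivAt (fun s ↦ sinh (s * r) * f s + sinh ((1 - s) * r) * g s)
      (r * f 0 - r * cosh r * g 0 + sinh r * g') 0 := by
  have h₁ : HasDerivAt (fun s : ℝ ↦ s * r) r 0 := by simpa using (hasDerivAt_id (0:ℝ)).mul_const r
  have h₂ : HasDerivAt (fun s : ℝ ↦ (1 - s) * r) (-r) 0 := by
    simpa using ((hasDerivAt_id (0:ℝ)).const_sub 1).mul_const r
  refine ((h₁.sinh.mul hf).add (h₂.sinh.mul hg)).congr_deriv ?_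
  simp only [zero_mul, sinh_zero, cosh_zero, sub_zero, one_mul]
  ring

namespace UpperHalfPlane

theorem dist_coe_center_coe_center {x z : ℍ} {r₁ r₂ : ℝ} (h₁ : 0 ≤ r₁) (h₂ : 0 ≤ r₂)
    (h : r₁ + r₂ = dist x z) :
    dist (x.center r₁ : ℂ) (z.center r₂) = x.im * sinh r₁ + z.im * sinh r₂ := by
  have hcosh : cosh r₁ * cosh r₂ + sinh r₁ * sinh r₂
      = ((x.re - z.re) ^ 2 + x.im ^ 2 + z.im ^ 2) / (2 * x.im * z.im) := by
    rw [← cosh_add, h, cosh_dist']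
  rw [Complex.dist_eq_re_im, Real.sqrt_eq_iff_eq_sq (by positivity)
    (by have := sinh_nonneg_iff.2 h₁; have := sinh_nonneg_iff.2 h₂; positivity)]
  simp only [coe_re, coe_im, center_re, center_im]
  field_simp at hcosh
  linear_combination x.im ^ 2 * cosh_sq_sub_sinh_sq r₁ + z.im ^ 2 * cosh_sq_sub_sinh_sq r₂ - hcosh

theorem exists_dist_eq_mul_and_dist_eq_one_sub_mul (x z : ℍ) {s : ℝ} (hs : s ∈ Icc (0 : ℝ) 1) :
    ∃ m : ℍ, dist x m = s * dist x z ∧ dist m z = (1 - s) * dist x z := by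
  have h₁ : 0 ≤ s * dist x z := mul_nonneg hs.1 dist_nonneg
  have h₂ : 0 ≤ (1 - s) * dist x z := mul_nonneg (sub_nonneg.2 hs.2) dist_nonneg
  set RX := x.im * sinh (s * dist x z)
  set RZ := z.im * sinh ((1 - s) * dist x z)
  have hRX : 0 ≤ RX := mul_nonneg x.im_pos.le (sinh_nonneg_iff.2 h₁)
  have hRZ : 0 ≤ RZ := mul_nonneg z.im_pos.le (sinh_nonneg_iff.2 h₂)
  have hc := dist_coe_center_coe_center h₁ h₂ (by ring)
  set m := AffineMap.lineMap (x.center (s * dist x z) : ℂ) (z.center ((1 - s) * dist x z))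
    (RX / (RX + RZ))
  have hmx : dist m (x.center (s * dist x z)) = RX := by
    rw [dist_lineMap_left, hc, Real.norm_of_nonneg (by positivity),
      div_mul_cancel_of_imp fun h ↦ by linarith]
  have hmz : dist m (z.center ((1 - s) * dist x z)) = RZ := by
    have ht : RX / (RX + RZ) ≤ 1 := div_le_one_of_le₀ (by linarith) (by positivity)
    rw [dist_lineMap_right, hc, Real.norm_of_nonneg (by linarith), sub_mul,
      div_mul_cancel_of_imp fun h ↦ by linarith]
    ring
  refine ⟨⟨m, im_pos_of_dist_center_le hmx.le⟩, ?_, ?_⟩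
  · rw [dist_comm]; exact dist_eq_iff_dist_coe_center_eq.2 hmx
  · exact dist_eq_iff_dist_coe_center_eq.2 hmz

/-- The hyperbolic circles about `x` and `z` through `m` are Euclidean circles; they are
externally tangent at `m`. -/
theorem coe_eq_lineMap_center_of_dist_add_dist_eq {x m z : ℍ}
    (h : dist x m + dist m z = dist x z) :
    (m : ℂ) = AffineMap.lineMap (x.center (dist x m) : ℂ) (z.center (dist m z))
      (x.im * sinh (dist x m) / (x.im * sinh (dist x m) + z.im * sinh (dist m z))) := by
  have hRX : 0 ≤ x.im * sinh (dist x m) := mul_nonneg x.im_pos.le (sinh_nonneg_iff.2 dist_nonneg)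
  have hRZ : 0 ≤ z.im * sinh (dist m z) := mul_nonneg z.im_pos.le (sinh_nonneg_iff.2 dist_nonneg)
  have hc := dist_coe_center_coe_center dist_nonneg dist_nonneg h
  apply eq_lineMap_of_dist_eq_mul_of_dist_eq_mul
  · rw [dist_comm, hc, div_mul_cancel_of_imp fun h ↦ by linarith]
    exact dist_eq_iff_dist_coe_center_eq.1 (dist_comm m x)
  · rw [hc, sub_mul, div_mul_cancel_of_imp fun h ↦ by linarith, one_mul, add_sub_cancel_left]
    exact dist_eq_iff_dist_coe_center_eq.1 rfl

theorem re_and_im_of_dist_add_dist_eq {x m z : ℍ} (h : dist x m + dist m z = dist x z) :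
    (x.im * sinh (dist x m) + z.im * sinh (dist m z)) * m.re
        = z.im * sinh (dist m z) * x.re + x.im * sinh (dist x m) * z.re ∧
      (x.im * sinh (dist x m) + z.im * sinh (dist m z)) * m.im = x.im * z.im * sinh (dist x z) := by
  have hRX : 0 ≤ x.im * sinh (dist x m) := mul_nonneg x.im_pos.le (sinh_nonneg_iff.2 dist_nonneg)
  have hRZ : 0 ≤ z.im * sinh (dist m z) := mul_nonneg z.im_pos.le (sinh_nonneg_iff.2 dist_nonneg)
  have ht := div_mul_cancel_of_imp (a := x.im * sinh (dist x m))
    (b := x.im * sinh (dist x m) + z.im * sinh (dist m z)) fun h ↦ by linarith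
  have hm := coe_eq_lineMap_center_of_dist_add_dist_eq h
  rw [AffineMap.lineMap_apply_module] at hm
  constructor
  · rw [← coe_re m, hm]
    simp only [Complex.add_re, Complex.real_smul, Complex.re_ofReal_mul, coe_re, center_re]
    linear_combination (z.re - x.re) * ht
  · rw [← coe_im m, hm, ← h, sinh_add]
    simp only [Complex.add_im, Complex.real_smul, Complex.im_ofReal_mul, coe_im, center_im]
    linear_combination (z.im * cosh (dist m z) - x.im * cosh (dist x m)) * ht

/-- Stewart's theorem in the hyperbolic plane. -/
theorem sinh_dist_mul_cosh_dist_of_dist_add_dist_eq {x m z : ℍ}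
    (h : dist x m + dist m z = dist x z) (w : ℍ) :
    sinh (dist x z) * cosh (dist m w)
      = sinh (dist m z) * cosh (dist x w) + sinh (dist x m) * cosh (dist z w) := by
  rcases (dist_nonneg : 0 ≤ dist x z).eq_or_lt with hD | hD
  · have h₁ : 0 ≤ dist x m := dist_nonneg
    have h₂ : 0 ≤ dist m z := dist_nonneg
    simp [← hD, show dist x m = 0 by linarith, show dist m z = 0 by linarith]
  obtain ⟨hre, him⟩ := re_and_im_of_dist_add_dist_eq h
  have hR : 0 < x.im * sinh (dist x m) + z.im * sinh (dist m z) :=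
    (mul_pos_iff_of_pos_right m.im_pos).1
      (him ▸ mul_pos (mul_pos x.im_pos z.im_pos) (sinh_pos_iff.2 hD))
  rw [← h] at him hD
  set r₁ := dist x m
  set r₂ := dist m z
  set RX := x.im * sinh r₁
  set RZ := z.im * sinh r₂
  rw [mul_comm, ← eq_div_iff hR.ne'] at hre him
  have key : (RZ * x.re + RX * z.re - (RX + RZ) * w.re) ^ 2 + (x.im * z.im * sinh (r₁ + r₂)) ^ 2
      + (RX + RZ) ^ 2 * w.im ^ 2 = (RX + RZ) * (RZ * ((x.re - w.re) ^ 2 + x.im ^ 2 + w.im ^ 2)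
        + RX * ((z.re - w.re) ^ 2 + z.im ^ 2 + w.im ^ 2)) := by
    have hE : (x.re - z.re) ^ 2 + x.im ^ 2 + z.im ^ 2
        = 2 * x.im * z.im * (cosh r₁ * cosh r₂ + sinh r₁ * sinh r₂) := by
      rw [← cosh_add, h, cosh_dist']
      field_simp
    simp only [RX, RZ, sinh_add]
    linear_combination x.im ^ 2 * z.im ^ 2 * (sinh r₁ ^ 2 * cosh_sq_sub_sinh_sq r₂
      + sinh r₂ ^ 2 * cosh_sq_sub_sinh_sq r₁) - sinh r₁ * sinh r₂ * x.im * z.im * hE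
  have hσ : sinh (r₁ + r₂) ≠ 0 := (sinh_pos_iff.2 hD).ne'
  rw [← h, cosh_dist' m w, cosh_dist' x w, cosh_dist' z w, hre, him]
  field_simp
  linear_combination key

/-- Numerator of `cos ∠xab` in the hyperbolic law of cosines: it equals
`sinh (dist a x) * sinh (dist a b) * cos ∠xab`. -/
noncomputable def cosAngleNum (a x b : ℍ) : ℝ := cosh (dist a x) * cosh (dist a b) - cosh (dist x b)

theorem cosh_dist_add_cosh_dist_of_midpoint {x a x' : ℍ} (h₁ : dist x a = dist a x')
    (h₂ : dist a x' = 1 / 2 * dist x x') (w : ℍ) :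
    cosh (dist x w) + cosh (dist x' w) = 2 * cosh (dist x a) * cosh (dist a w) := by
  have hsum : dist x a + dist a x' = dist x x' := by linarith
  have hS := sinh_dist_mul_cosh_dist_of_dist_add_dist_eq hsum w
  rw [← hsum, ← h₁, ← two_mul, sinh_two_mul] at hS
  rcases (dist_nonneg : 0 ≤ dist x a).eq_or_lt with hp | hp
  · obtain rfl : x = a := dist_eq_zero.1 hp.symm
    obtain rfl : x = x' := dist_eq_zero.1 (h₁ ▸ hp.symm)
    rw [dist_self, cosh_zero]
    ring
  · apply mul_left_cancel₀ (sinh_pos_iff.2 hp).ne'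
    linear_combination -hS

theorem cosh_dist_of_midpoints {x x' y y' a b : ℍ}
    (hx₁ : dist x a = dist a x') (hx₂ : dist a x' = 1 / 2 * dist x x')
    (hy₁ : dist y b = dist b y') (hy₂ : dist b y' = 1 / 2 * dist y y') :
    cosh (dist x' y') = cosh (dist x y) + 2 * cosh (dist y b) * cosAngleNum a x b
      + 2 * cosh (dist x a) * cosAngleNum b y a := by
  have e₁ := cosh_dist_add_cosh_dist_of_midpoint hx₁ hx₂ y'
  have e₂ := cosh_dist_add_cosh_dist_of_midpoint hy₁ hy₂ x
  have e₃ := cosh_dist_add_cosh_dist_of_midpoint hy₁ hy₂ a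
  simp only [cosAngleNum]
  rw [dist_comm y x, dist_comm b x, dist_comm y' x, dist_comm a y'] at *
  rw [dist_comm b a, dist_comm a x, dist_comm b y] at *
  linear_combination e₁ - e₂ + 2 * cosh (dist x a) * e₃

theorem cosAngleNum_nonpos_of_forall_dist_le {w y b : ℍ}
    (hmin : ∀ lam ∈ Icc (0 : ℝ) 1, ∀ yl : ℍ, dist y yl = lam * dist y b →
      dist yl b = (1 - lam) * dist y b → dist w b ≤ dist w yl) :
    cosAngleNum b y w ≤ 0 := by
  rcases (dist_nonneg : 0 ≤ dist y b).eq_or_lt with hq | hq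
  · obtain rfl : y = b := dist_eq_zero.1 hq.symm
    simp [cosAngleNum, dist_comm]
  have hu : IsMinOn (fun s ↦ sinh (s * dist y b) * cosh (dist y w)
      + sinh ((1 - s) * dist y b) * cosh (dist b w)) (Icc 0 1) 0 := by
    refine isMinOn_iff.2 fun s hs ↦ ?_
    have hs' : 1 - s ∈ Icc (0 : ℝ) 1 := ⟨by linarith [hs.2], by linarith [hs.1]⟩
    obtain ⟨yl, h₁, h₂⟩ := exists_dist_eq_mul_and_dist_eq_one_sub_mul y b hs'
    have hS := sinh_dist_mul_cosh_dist_of_dist_add_dist_eq (x := y) (m := yl) (z := b)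
      (by rw [h₁, h₂]; ring) w
    rw [h₁, h₂, sub_sub_cancel] at hS
    have hle := (cosh_strictMonoOn.le_iff_le dist_nonneg dist_nonneg).2 (hmin _ hs' yl h₁ h₂)
    simp only [zero_mul, sinh_zero, sub_zero, one_mul, zero_add]
    rw [← hS, dist_comm yl, dist_comm b]
    exact mul_le_mul_of_nonneg_left hle (sinh_nonneg_iff.2 hq.le)
  have hd := hu.hasDerivWithinAt_nonneg zero_lt_one (hasDerivAt_sinh_mul_add_sinh_one_sub_mul
    (dist y b) (hasDerivAt_const _ _) (hasDerivAt_const _ _)).hasDerivWithinAt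
  rw [cosAngleNum, dist_comm b y]
  nlinarith

/-- By Stewart's theorem, `sinh (dist x a) * sinh (dist y b) * cosh (dist xl yl)` is an explicit
function of `s = 1 - lam`, minimal at `s = 0`, where its derivative is minus the left-hand side. -/
theorem mul_cosAngleNum_add_mul_cosAngleNum_nonpos_of_forall_dist_le {x y a b : ℍ}
    (hmin : ∀ lam ∈ Icc (0 : ℝ) 1, ∀ xl yl : ℍ,
      dist x xl = lam * dist x a → dist xl a = (1 - lam) * dist x a →
      dist y yl = lam * dist y b → dist yl b = (1 - lam) * dist y b →
      dist a b ≤ dist xl yl) :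
    dist x a * sinh (dist y b) * cosAngleNum a x b
      + dist y b * sinh (dist x a) * cosAngleNum b y a ≤ 0 := by
  have hu : IsMinOn (fun s ↦ sinh (s * dist x a)
        * (sinh (s * dist y b) * cosh (dist y x) + sinh ((1 - s) * dist y b) * cosh (dist b x))
      + sinh ((1 - s) * dist x a)
        * (sinh (s * dist y b) * cosh (dist y a) + sinh ((1 - s) * dist y b) * cosh (dist b a)))
      (Icc 0 1) 0 := by
    refine isMinOn_iff.2 fun s hs ↦ ?_
    have hs' : 1 - s ∈ Icc (0 : ℝ) 1 := ⟨by linarith [hs.2], by linarith [hs.1]⟩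
    obtain ⟨xl, hx₁, hx₂⟩ := exists_dist_eq_mul_and_dist_eq_one_sub_mul x a hs'
    obtain ⟨yl, hy₁, hy₂⟩ := exists_dist_eq_mul_and_dist_eq_one_sub_mul y b hs'
    have hxsum : dist x xl + dist xl a = dist x a := by rw [hx₁, hx₂]; ring
    have hysum : dist y yl + dist yl b = dist y b := by rw [hy₁, hy₂]; ring
    have hX := sinh_dist_mul_cosh_dist_of_dist_add_dist_eq hxsum yl
    have hYx := sinh_dist_mul_cosh_dist_of_dist_add_dist_eq hysum x
    have hYa := sinh_dist_mul_cosh_dist_of_dist_add_dist_eq hysum a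
    rw [hx₁, hx₂, sub_sub_cancel] at hX
    rw [hy₁, hy₂, sub_sub_cancel] at hYx hYa
    have hle := (cosh_strictMonoOn.le_iff_le dist_nonneg dist_nonneg).2
      (hmin _ hs' xl yl hx₁ hx₂ hy₁ hy₂)
    simp only [zero_mul, sinh_zero, sub_zero, one_mul, zero_add]
    rw [← hYx, ← hYa, dist_comm yl x, dist_comm yl a, dist_comm b a]
    have hsp := sinh_nonneg_iff.2 (dist_nonneg : 0 ≤ dist x a)
    have hsq := sinh_nonneg_iff.2 (dist_nonneg : 0 ≤ dist y b)
    nlinarith [mul_le_mul_of_nonneg_left hle (mul_nonneg hsp hsq)]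
  have hd := hu.hasDerivWithinAt_nonneg zero_lt_one (hasDerivAt_sinh_mul_add_sinh_one_sub_mul _
    (hasDerivAt_sinh_mul_add_sinh_one_sub_mul _ (hasDerivAt_const _ _) (hasDerivAt_const _ _))
    (hasDerivAt_sinh_mul_add_sinh_one_sub_mul _ (hasDerivAt_const _ _) (hasDerivAt_const _ _))
    ).hasDerivWithinAt
  simp only [zero_mul, sinh_zero, sub_zero, one_mul, zero_add] at hd
  rw [cosAngleNum, cosAngleNum, dist_comm a x, dist_comm b y, dist_comm x b, dist_comm a b]
  linarith

end UpperHalfPlane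

theorem Real.cosh_mul_add_cosh_mul_nonpos {p q X Y : ℝ} (hp : 0 < p) (hpq : p ≤ q)
    (hvar : p * sinh q * X + q * sinh p * Y ≤ 0) (hXY : 0 ≤ Y ∨ X ≤ 0) :
    cosh q * X + cosh p * Y ≤ 0 := by
  have hsp : 0 < sinh p := sinh_pos_iff.2 hp
  have hsq : 0 < sinh q := sinh_pos_iff.2 (hp.trans_le hpq)
  have hq : 0 < q * sinh p := mul_pos (hp.trans_le hpq) hsp
  have hX : X ≤ 0 := hXY.elim (fun hY ↦ by
    by_contra! hX
    nlinarith [mul_pos (mul_pos hp hsq) hX, mul_nonneg hq.le hY]) id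
  have := mul_cosh_mul_sinh_le hp.le hpq
  refine nonpos_of_mul_nonpos_right ?_ hq
  nlinarith [mul_le_mul_of_nonneg_left hvar (cosh_pos p).le]

open UpperHalfPlane

/-- Case (iii) of the Appendix Proposition in the hyperbolic plane: if `a` is the midpoint of
`x` and `x'`, `b` is the midpoint of `y` and `y'`, `dist x a < dist y b`, the distance
`dist a b` is minimal among distances between corresponding convex combinations
`(1-λ)x + λa` and `(1-λ)y + λb`, and moreover the angle `γ` at `b` between `[b,y]` and `[b,a]`
satisfies `γ ≤ π/2`, or the angle `γ'` at `a` between `[a,x]` and `[a,b]` satisfies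
`γ' ≥ π/2` (both expressed via the hyperbolic law of cosines), then
`dist x' y' ≤ dist x y`. -/
theorem hyperbolic_appendix_case_iii
    (x x' y y' a b : UpperHalfPlane)
    (ha1 : dist x a = dist a x') (ha2 : dist a x' = (1 / 2) * dist x x')
    (hb1 : dist y b = dist b y') (hb2 : dist b y' = (1 / 2) * dist y y')
    (hlt : dist x a < dist y b)
    (hmin : ∀ lam ∈ Set.Icc (0 : ℝ) 1, ∀ xl yl : UpperHalfPlane,
      dist x xl = lam * dist x a → dist xl a = (1 - lam) * dist x a →
      dist y yl = lam * dist y b → dist yl b = (1 - lam) * dist y b →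
      dist a b ≤ dist xl yl)
    (hangle : Real.cosh (dist b y) * Real.cosh (dist b a) ≥ Real.cosh (dist y a) ∨
      Real.cosh (dist a x) * Real.cosh (dist a b) ≤ Real.cosh (dist x b)) :
    dist x' y' ≤ dist x y := by
  suffices h : cosh (dist y b) * cosAngleNum a x b + cosh (dist x a) * cosAngleNum b y a ≤ 0 by
    refine (cosh_strictMonoOn.le_iff_le dist_nonneg dist_nonneg).1 ?_
    linarith [cosh_dist_of_midpoints ha1 ha2 hb1 hb2]
  rcases (dist_nonneg : 0 ≤ dist x a).eq_or_lt with hp | hp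
  · obtain rfl : x = a := dist_eq_zero.1 hp.symm
    have := cosAngleNum_nonpos_of_forall_dist_le fun lam hlam yl ↦
      hmin lam hlam x yl (by simp) (by simp)
    simpa [cosAngleNum] using this
  · refine cosh_mul_add_cosh_mul_nonpos hp hlt.le
      (mul_cosAngleNum_add_mul_cosAngleNum_nonpos_of_forall_dist_le hmin) ?_
    simpa only [cosAngleNum, sub_nonneg, sub_nonpos] using hangle
end

section
/- Let H be a real Hilbert space and x, x′, y, y′ ∈ H. Set a = (x + x′)/2 and b = (y + y′)/2. If ‖a − b‖ ≤ ‖((1 − λ)·x + λ·a) − ((1 − λ)·y + λ·b)‖ for every λ ∈ [0,1], then ‖x′ − y′‖ ≤ ‖x − y‖. -/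
open Set
open scoped RealInnerProductSpace

/-! With `u = x - y` and `v = a - b`, the hypothesis says that `v` is the point of least norm on
the segment `[v, u]`, so `⟪v, u - v⟫ ≥ 0` by the variational characterisation of the nearest
point of a convex set. As `x' - y' = 2v - u` and `‖2v - u‖² = ‖u‖² - 4⟪v, u - v⟫`, the claim
follows. -/

section

variable {F : Type*} [NormedAddCommGroup F] [InnerProductSpace ℝ F]

theorem real_inner_nonneg_of_forall_norm_le_norm_add_smul {v w : F}
    (h : ∀ t ∈ Icc (0 : ℝ) 1, ‖v‖ ≤ ‖v + t • w‖) : 0 ≤ ⟪v, w⟫ := by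
  have hv : v ∈ segment ℝ v (v + w) := left_mem_segment ℝ v (v + w)
  have hmin : ‖0 - v‖ = ⨅ z : segment ℝ v (v + w), ‖0 - (z : F)‖ := by
    have : Nonempty (segment ℝ v (v + w)) := ⟨⟨v, hv⟩⟩
    refine le_antisymm (le_ciInf ?_) (ciInf_le ⟨0, ?_⟩ (⟨v, hv⟩ : segment ℝ v (v + w)))
    · rintro ⟨z, hz⟩
      rw [segment_eq_image'] at hz
      obtain ⟨t, ht, rfl⟩ := hz
      simp only [zero_sub, norm_neg, add_sub_cancel_left]
      exact h t ht
    · rintro _ ⟨z, rfl⟩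
      exact norm_nonneg _
  have hinner := (norm_eq_iInf_iff_real_inner_le_zero (convex_segment v (v + w)) hv).1 hmin
    (v + w) (right_mem_segment ℝ v (v + w))
  simpa [inner_neg_left] using hinner

theorem norm_two_smul_sub_le_of_real_inner_nonneg {u v : F} (h : 0 ≤ ⟪v, u - v⟫) :
    ‖(2 : ℝ) • v - u‖ ≤ ‖u‖ := by
  have hsq : ‖(2 : ℝ) • v - u‖ ^ 2 = ‖u‖ ^ 2 - 4 * ⟪v, u - v⟫ := by
    rw [norm_sub_sq_real, norm_smul, real_inner_smul_left, inner_sub_right,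
      real_inner_self_eq_norm_sq, Real.norm_two]
    ring
  exact pow_le_pow_iff_left₀ (norm_nonneg _) (norm_nonneg _) two_ne_zero |>.1 (by linarith)

end

/-- In a real Hilbert space, if `a = (x + x')/2`, `b = (y + y')/2`, and
`‖a - b‖ ≤ ‖((1-λ)x + λa) - ((1-λ)y + λb)‖` for every `λ ∈ [0,1]`, then
`‖x' - y'‖ ≤ ‖x - y‖`. -/
theorem hilbert_midpoint_min_implies_reflection_nonexpansive
    {H : Type*} [NormedAddCommGroup H] [InnerProductSpace ℝ H]
    (x x' y y' : H) (a b : H)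
    (ha : a = (1 / 2 : ℝ) • (x + x')) (hb : b = (1 / 2 : ℝ) • (y + y'))
    (hmin : ∀ lam ∈ Set.Icc (0 : ℝ) 1,
      ‖a - b‖ ≤ ‖((1 - lam) • x + lam • a) - ((1 - lam) • y + lam • b)‖) :
    ‖x' - y'‖ ≤ ‖x - y‖ := by
  have hsegment : ∀ t ∈ Icc (0 : ℝ) 1, ‖a - b‖ ≤ ‖(a - b) + t • ((x - y) - (a - b))‖ := by
    intro t ⟨ht₀, ht₁⟩
    convert hmin (1 - t) ⟨by linarith, by linarith⟩ using 2
    module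
  have hreflect : x' - y' = (2 : ℝ) • (a - b) - (x - y) := by
    subst ha hb
    module
  rw [hreflect]
  exact norm_two_smul_sub_le_of_real_inner_nonneg
    (real_inner_nonneg_of_forall_norm_le_norm_add_smul hsegment)
end

section
/- Let n ∈ ℕ and let x, x′, p, q be unit vectors in EuclideanSpace ℝ (Fin (n+1)), with spherical distance d(u,v) = arccos ⟪u,v⟫. Suppose p is the midpoint of x and x′, i.e., d(x,p) = d(p,x′) = (1/2)·d(x,x′), with d(x,p) < π/2 and d(p,q) < π/2, and suppose cos(d(q,x)) ≤ cos(d(p,x))·cos(d(p,q)) (by the spherical law of cosines, the angle at p between the segments [p,x] and [p,q] is at least π/2). Then d(q,x′) ≤ d(q,x). -/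
/-!
The midpoint conditions give `⟪p, x'⟫ = ⟪x, p⟫` and, by the double-angle formula,
`⟪x, x'⟫ = 2⟪x, p⟫² - 1`; together these force `x'` to be the reflection `2⟪x, p⟫ p - x` of `x`
across the axis through `p`. Hence `⟪q, x'⟫ = 2⟪x, p⟫⟪p, q⟫ - ⟪q, x⟫`, which the angle condition
`⟪q, x⟫ ≤ ⟪x, p⟫⟪p, q⟫` makes at least `⟪q, x⟫`, and `arccos` is antitone.
-/

open Real

section Reflection

variable {E : Type*} [NormedAddCommGroup E] [InnerProductSpace ℝ E]

theorem norm_two_inner_smul_sub {p : E} (hp : ‖p‖ = 1) (x : E) :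
    ‖(2 * inner ℝ x p) • p - x‖ = ‖x‖ := by
  have hsq : ‖(2 * inner ℝ x p) • p - x‖ ^ 2 = ‖x‖ ^ 2 := by
    rw [norm_sub_sq_real, norm_smul, real_inner_smul_left, hp, real_inner_comm p x,
      Real.norm_eq_abs, mul_one, sq_abs]
    ring
  exact (pow_left_inj₀ (norm_nonneg _) (norm_nonneg _) two_ne_zero).mp hsq

theorem eq_two_inner_smul_sub_of_inner_eq {x x' p : E}
    (hx : ‖x‖ = 1) (hx' : ‖x'‖ = 1) (hp : ‖p‖ = 1)
    (hpx' : inner ℝ p x' = inner ℝ x p) (hxx' : inner ℝ x x' = 2 * inner ℝ x p ^ 2 - 1) :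
    x' = (2 * inner ℝ x p) • p - x := by
  rw [← inner_eq_one_iff_of_norm_eq_one (𝕜 := ℝ) hx' ((norm_two_inner_smul_sub hp x).trans hx),
    inner_sub_right, real_inner_smul_right, real_inner_comm p x', hpx', real_inner_comm x x',
    hxx']
  ring

end Reflection

section SphericalDist

variable {n : ℕ} {u v : EuclideanSpace ℝ (Fin (n + 1))}

theorem inner_mem_Icc_of_norm_eq_one (hu : ‖u‖ = 1) (hv : ‖v‖ = 1) :
    inner ℝ u v ∈ Set.Icc (-1 : ℝ) 1 :=
  abs_le.mp ((abs_real_inner_le_norm u v).trans_eq (by rw [hu, hv, mul_one]))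

theorem cos_sphericalDist (hu : ‖u‖ = 1) (hv : ‖v‖ = 1) :
    cos (sphericalDist u v) = inner ℝ u v :=
  cos_arccos (inner_mem_Icc_of_norm_eq_one hu hv).1 (inner_mem_Icc_of_norm_eq_one hu hv).2

theorem eq_two_inner_smul_sub_of_sphericalDist_midpoint {x x' p : EuclideanSpace ℝ (Fin (n + 1))}
    (hx : ‖x‖ = 1) (hx' : ‖x'‖ = 1) (hp : ‖p‖ = 1)
    (hmid1 : sphericalDist x p = sphericalDist p x')
    (hmid2 : sphericalDist p x' = (1 / 2) * sphericalDist x x') :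
    x' = (2 * inner ℝ x p) • p - x := by
  have hpx' : inner ℝ p x' = inner ℝ x p := by
    rw [← cos_sphericalDist hp hx', ← cos_sphericalDist hx hp, hmid1]
  have hxx' : inner ℝ x x' = 2 * inner ℝ x p ^ 2 - 1 := by
    rw [← cos_sphericalDist hx hx', ← hpx', ← cos_sphericalDist hp hx', ← cos_two_mul, hmid2]
    ring_nf
  exact eq_two_inner_smul_sub_of_inner_eq hx hx' hp hpx' hxx'

end SphericalDist

theorem spherical_reflection_decreases_dist_general {n : ℕ}
    (x x' p q : EuclideanSpace ℝ (Fin (n + 1)))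
    (hx : ‖x‖ = 1) (hx' : ‖x'‖ = 1) (hp : ‖p‖ = 1) (hq : ‖q‖ = 1)
    (hmid1 : sphericalDist x p = sphericalDist p x')
    (hmid2 : sphericalDist p x' = (1 / 2) * sphericalDist x x')
    (hangle : Real.cos (sphericalDist q x) ≤
      Real.cos (sphericalDist p x) * Real.cos (sphericalDist p q)) :
    sphericalDist q x' ≤ sphericalDist q x := by
  have hinner : inner ℝ q x ≤ inner ℝ x p * inner ℝ q p := by
    rwa [cos_sphericalDist hq hx, cos_sphericalDist hp hx, cos_sphericalDist hp hq,
      real_inner_comm x p, real_inner_comm q p] at hangle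
  apply arccos_le_arccos
  rw [eq_two_inner_smul_sub_of_sphericalDist_midpoint hx hx' hp hmid1 hmid2, inner_sub_right,
    real_inner_smul_right]
  linarith

/-- On the unit sphere, if `p` is the midpoint of `x` and `x'`, with `d(x,p) < π/2` and
`d(p,q) < π/2`, and the angle at `p` between the segments `[p,x]` and `[p,q]` is at least
`π/2` (expressed via the spherical law of cosines as
`cos d(q,x) ≤ cos d(p,x) * cos d(p,q)`), then `d(q,x') ≤ d(q,x)`. -/
theorem spherical_reflection_decreases_dist {n : ℕ}
    (x x' p q : EuclideanSpace ℝ (Fin (n + 1)))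
    (hx : ‖x‖ = 1) (hx' : ‖x'‖ = 1) (hp : ‖p‖ = 1) (hq : ‖q‖ = 1)
    (hmid1 : sphericalDist x p = sphericalDist p x')
    (hmid2 : sphericalDist p x' = (1 / 2) * sphericalDist x x')
    (hxp : sphericalDist x p < π / 2) (hpq : sphericalDist p q < π / 2)
    (hangle : Real.cos (sphericalDist q x) ≤
      Real.cos (sphericalDist p x) * Real.cos (sphericalDist p q)) :
    sphericalDist q x' ≤ sphericalDist q x :=
  spherical_reflection_decreases_dist_general x x' p q hx hx' hp hq hmid1 hmid2 hangle
end
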